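/- Let Γ be the semidirect product (ℚ³ ⊕ ℚ³) ⋊ SL(3,ℚ), and let n ∈ ℕ. If every group homomorphism from SL(3,ℚ) to the unitary group U(n) of n×n complex matrices is trivial, then every group homomorphism from Γ to U(n) is trivial. -/

import Mathlib

open Matrix

/-- The additive group `R³ ⊕ R³`. -/
abbrev VV (R : Type*) := (Fin 3 → R) × (Fin 3 → R)

/-- Transpose, as a map on `SL(3,R)`. -/
def transposeSL {R : Type*} [CommRing R] (A : Matrix.SpecialLinearGroup (Fin 3) R) :
    Matrix.SpecialLinearGroup (Fin 3) R :=
  ⟨A.val.transpose, by rw [Matrix.det_transpose]; exact A.prop⟩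

/-- The group homomorphism `A ↦ (Aᵀ)⁻¹` on `SL(3,R)`. -/
def dualHom {R : Type*} [CommRing R] :
    Matrix.SpecialLinearGroup (Fin 3) R →* Matrix.SpecialLinearGroup (Fin 3) R where
  toFun A := (transposeSL A)⁻¹
  map_one' := by
    show (transposeSL 1)⁻¹ = 1
    rw [show transposeSL (1 : Matrix.SpecialLinearGroup (Fin 3) R) = 1 from
      Subtype.ext Matrix.transpose_one, inv_one]
  map_mul' A B := by
    show (transposeSL (A * B))⁻¹ = (transposeSL A)⁻¹ * (transposeSL B)⁻¹
    have h : transposeSL (A * B) = transposeSL B * transposeSL A :=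
      Subtype.ext (by simp [transposeSL, Matrix.transpose_mul]; rfl)
    rw [h, _root_.mul_inv_rev]

/-- The multiplicative group structure that `AddAut` carried in older Mathlib
(composition as multiplication), restored here. -/
instance AddAut.oldGroup {A : Type*} [Add A] : Group (AddAut A) where
  mul g h := AddEquiv.trans h g
  one := AddEquiv.refl _
  inv := AddEquiv.symm
  mul_assoc _ _ _ := rfl
  one_mul _ := rfl
  mul_one _ := rfl
  inv_mul_cancel := AddEquiv.self_trans_symm

/-- Linear automorphisms as additive automorphisms, as a group homomorphism. -/
def linToAddAut {R : Type*} [CommRing R] :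
    ((Fin 3 → R) ≃ₗ[R] (Fin 3 → R)) →* AddAut (Fin 3 → R) where
  toFun e := e.toAddEquiv
  map_one' := rfl
  map_mul' _ _ := rfl

/-- Pairs of additive automorphisms give additive automorphisms of the product. -/
def addAutProd {R : Type*} [CommRing R] :
    AddAut (Fin 3 → R) × AddAut (Fin 3 → R) →* AddAut (VV R) where
  toFun p := AddEquiv.prodCongr p.1 p.2
  map_one' := rfl
  map_mul' _ _ := rfl

/-- The action of `SL(3,R)` on `R³ ⊕ R³` given by `A · (x,y) = (Ax, (Aᵀ)⁻¹y)`,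
as a homomorphism into additive automorphisms. -/
noncomputable def sl3Act {R : Type*} [CommRing R] :
    Matrix.SpecialLinearGroup (Fin 3) R →* AddAut (VV R) :=
  addAutProd.comp
    (((linToAddAut.comp Matrix.SpecialLinearGroup.toLin')).prod
      ((linToAddAut.comp Matrix.SpecialLinearGroup.toLin').comp dualHom))

/-- Additive automorphisms as multiplicative automorphisms of `Multiplicative`. -/
def addAutToMulAut {A : Type*} [AddGroup A] : AddAut A →* MulAut (Multiplicative A) where
  toFun e := AddEquiv.toMultiplicative e
  map_one' := rfl
  map_mul' _ _ := rfl

/-- The action of `SL(3,R)` on `Multiplicative (R³ ⊕ R³)`. -/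
noncomputable def sl3ActM (R : Type*) [CommRing R] :
    Matrix.SpecialLinearGroup (Fin 3) R →* MulAut (Multiplicative (VV R)) :=
  addAutToMulAut.comp sl3Act

/-- The group `Γ_R = (R³ ⊕ R³) ⋊ SL(3,R)`. -/
abbrev GammaR (R : Type*) [CommRing R] :=
  SemidirectProduct (Multiplicative (VV R)) (Matrix.SpecialLinearGroup (Fin 3) R) (sl3ActM R)

/-- Coordinatewise integer casting `ℤ³ → ℚ³` as an additive homomorphism. -/
def intCast3 : (Fin 3 → ℤ) →+ (Fin 3 → ℚ) := (Int.castAddHom ℚ).compLeft (Fin 3)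

/-- The inclusion `ℤ³ ⊕ ℤ³ → ℚ³ ⊕ ℚ³`. -/
def intVec : VV ℤ →+ VV ℚ := intCast3.prodMap intCast3

/-- The subgroup `Λ = ℤ³ ⊕ ℤ³` of `Γ = (ℚ³ ⊕ ℚ³) ⋊ SL(3,ℚ)`. -/
noncomputable def LambdaSub : Subgroup (GammaR ℚ) :=
  (AddSubgroup.toSubgroup intVec.range).map SemidirectProduct.inl

/-- The dot product on `R³`. -/
def dotR {R : Type*} [CommRing R] (x y : Fin 3 → R) : R := ∑ i, x i * y i

/-- The 2-cocycle `Ω_α` on `ℚ³ ⊕ ℚ³`. -/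
noncomputable def OmegaQ (α : ℝ) (g h : VV ℚ) : Circle :=
  Circle.exp (2 * Real.pi * α * ((dotR g.1 h.2 - dotR g.2 h.1 : ℚ) : ℝ))

/-- The extension `Ω̃_α` of `Ω_α` to `Γ = (ℚ³ ⊕ ℚ³) ⋊ SL(3,ℚ)`. -/
noncomputable def OmegaT (α : ℝ) (g h : GammaR ℚ) : Circle :=
  OmegaQ α (Multiplicative.toAdd g.left) (sl3Act g.right (Multiplicative.toAdd h.left))

/-!
A homomorphism `π` that kills `SL(3,R)` is constant on `SL(3,R)`-orbits in `R³ ⊕ R³`, since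
conjugating `inl v` by `inr A` gives `inl (A • v)`. When `2` is a unit, a diagonal matrix of
`SL(3,R)` doubles a given vector `(a eᵢ, 0)` or `(0, b eᵢ)`, so `u = π (inl v)` satisfies `u² = u`,
i.e. `u = 1`. These vectors generate `R³ ⊕ R³`.
-/

open SemidirectProduct

theorem SemidirectProduct.map_inl_aut_of_map_inr_eq_one {N G H : Type*} [Group N] [Group G]
    [Group H] {φ : G →* MulAut N} (π : N ⋊[φ] G →* H) (hπ : ∀ g, π (inr g) = 1) (g : G) (n : N) :
    π (inl (φ g n)) = π (inl n) := by
  rw [inl_aut, map_mul, map_mul, hπ, hπ, one_mul, mul_one]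

theorem exists_prod_eq_one_and_apply_eq {ι G : Type*} [Fintype ι] [DecidableEq ι] [Nontrivial ι]
    [CommGroup G] (i : ι) (c : G) : ∃ d : ι → G, ∏ k, d k = 1 ∧ d i = c := by
  obtain ⟨j, hji⟩ := exists_ne i
  refine ⟨Pi.mulSingle i c * Pi.mulSingle j c⁻¹, ?_, ?_⟩
  · simp [Finset.prod_mul_distrib]
  · simp [Pi.mulSingle_eq_of_ne hji.symm]

theorem AddSubgroup.eq_top_of_single_mem {ι M N : Type*} [Fintype ι] [DecidableEq ι]
    [AddCommGroup M] [AddCommGroup N] (S : AddSubgroup ((ι → M) × (ι → N)))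
    (hfst : ∀ i a, (Pi.single i a, 0) ∈ S) (hsnd : ∀ i b, (0, Pi.single i b) ∈ S) : S = ⊤ := by
  refine eq_top_iff' S |>.mpr fun ⟨x, y⟩ => ?_
  have hxy : (x, y) = ∑ i, (Pi.single i (x i), 0) + ∑ i, (0, Pi.single i (y i)) := by
    ext <;> simp [Prod.fst_sum, Prod.snd_sum, Finset.univ_sum_single]
  rw [hxy]
  exact add_mem (sum_mem fun i _ => hfst i _) (sum_mem fun i _ => hsnd i _)

namespace Matrix.SpecialLinearGroup

variable {n R : Type*} [Fintype n] [DecidableEq n] [CommRing R]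

def diagonal (d : n → Rˣ) (hd : ∏ i, d i = 1) : SpecialLinearGroup n R :=
  ⟨Matrix.diagonal fun i => d i, by simp [det_diagonal, ← Units.coe_prod, hd]⟩

end Matrix.SpecialLinearGroup

section GammaR

variable {R H : Type*} [CommRing R] [Group H]

theorem dualHom_diagonal (d : Fin 3 → Rˣ) (hd : ∏ i, d i = 1) :
    dualHom (SpecialLinearGroup.diagonal d hd) =
      SpecialLinearGroup.diagonal d⁻¹ (by simp [Finset.prod_inv_distrib, hd]) := by
  refine inv_eq_of_mul_eq_one_right (Subtype.ext ?_)
  change (Matrix.diagonal fun i => (d i : R))ᵀ * Matrix.diagonal (fun i => ((d⁻¹ i : Rˣ) : R)) = 1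
  simp [diagonal_mul_diagonal]

theorem sl3Act_apply (A : SpecialLinearGroup (Fin 3) R) (v : VV R) :
    sl3Act A v = (A.val *ᵥ v.1, (dualHom A).val *ᵥ v.2) :=
  rfl

theorem sl3Act_diagonal_single_fst (d : Fin 3 → Rˣ) (hd : ∏ i, d i = 1) (i : Fin 3) (a : R) :
    sl3Act (SpecialLinearGroup.diagonal d hd) (Pi.single i a, 0) = (Pi.single i (d i * a), 0) := by
  rw [sl3Act_apply]
  simp [SpecialLinearGroup.diagonal, ← Pi.single_smul, mul_comm]

theorem sl3Act_diagonal_single_snd (d : Fin 3 → Rˣ) (hd : ∏ i, d i = 1) (i : Fin 3) (b : R) :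
    sl3Act (SpecialLinearGroup.diagonal d hd) (0, Pi.single i b) =
      (0, Pi.single i (↑(d i)⁻¹ * b)) := by
  rw [sl3Act_apply, dualHom_diagonal]
  simp [SpecialLinearGroup.diagonal, ← Pi.single_smul, mul_comm]

theorem GammaR.map_inl_eq_one_of_sl3Act_eq_add_self (π : GammaR R →* H)
    (hπ : ∀ A, π (inr A) = 1) {A : SpecialLinearGroup (Fin 3) R} {v : VV R}
    (hv : sl3Act A v = v + v) : π (inl (Multiplicative.ofAdd v)) = 1 := by
  have hinv := map_inl_aut_of_map_inr_eq_one π hπ A (Multiplicative.ofAdd v)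
  change π (inl (Multiplicative.ofAdd (sl3Act A v))) = _ at hinv
  rw [hv, ofAdd_add, inl.map_mul, map_mul] at hinv
  exact mul_eq_left.mp hinv

theorem GammaR.map_eq_one_of_map_inr_eq_one (h2 : IsUnit (2 : R)) (π : GammaR R →* H)
    (hπ : ∀ A, π (inr A) = 1) : π = 1 := by
  obtain ⟨u, hu⟩ := h2
  have hker : (π.comp inl).ker.toAddSubgroup' = ⊤ := by
    refine AddSubgroup.eq_top_of_single_mem _ (fun i a => ?_) (fun i b => ?_)
    · obtain ⟨d, hd, hdi⟩ := exists_prod_eq_one_and_apply_eq i u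
      refine map_inl_eq_one_of_sl3Act_eq_add_self π hπ (A := .diagonal d hd) ?_
      rw [sl3Act_diagonal_single_fst, hdi, hu, two_mul, Pi.single_add, Prod.mk_add_mk, add_zero]
    · obtain ⟨d, hd, hdi⟩ := exists_prod_eq_one_and_apply_eq i u⁻¹
      refine map_inl_eq_one_of_sl3Act_eq_add_self π hπ (A := .diagonal d hd) ?_
      rw [sl3Act_diagonal_single_snd, hdi, inv_inv, hu, two_mul, Pi.single_add, Prod.mk_add_mk,
        add_zero]
  refine hom_ext (MonoidHom.ext fun v => ?_) (MonoidHom.ext hπ)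
  have hv := hker ▸ AddSubgroup.mem_top (Multiplicative.toAdd v)
  simpa using hv

end GammaR

/-- If every homomorphism `SL(3,ℚ) →* U(n)` is trivial, then every
homomorphism `Γ →* U(n)` is trivial, where `Γ = (ℚ³ ⊕ ℚ³) ⋊ SL(3,ℚ)`. -/
theorem gamma_rep_trivial_of_SL3_rep_trivial (n : ℕ)
    (h : ∀ ρ : Matrix.SpecialLinearGroup (Fin 3) ℚ →* Matrix.unitaryGroup (Fin n) ℂ,
      ∀ A, ρ A = 1)
    (π : GammaR ℚ →* Matrix.unitaryGroup (Fin n) ℂ) (g : GammaR ℚ) :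
    π g = 1 := by
  rw [GammaR.map_eq_one_of_map_inr_eq_one (by norm_num) π (h (π.comp inr))]
  rfl
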